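/- arXiv:math/9401221 — 2 statements merged into one kernel-verified Lean document; each statement's English description precedes it below -/
import Mathlib

section
/- Let φ : ℝ → ℂ be measurable and suppose there exist constants C > 0 and a > 0 with |φ(x)| ≤ C e^{−a|x|} for all x ∈ ℝ. Then there exists a constant C' > 0 such that for all j ∈ ℤ and all x, y ∈ ℝ, the summation kernel satisfies |P_j(x,y)| ≤ C' · 2^j · e^{−a 2^j |x−y| / 2}. -/
open MeasureTheory Filter Topology

noncomputable section

/-- The one-dimensional summation kernel
`P_j(x,y) = Σ_{k∈ℤ} 2^j φ(2^j x − k) conj(φ(2^j y − k))`. -/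
def summationKernel1 (φ : ℝ → ℂ) (j : ℤ) (x y : ℝ) : ℂ :=
  ∑' k : ℤ, (((2 : ℝ) ^ j : ℝ) : ℂ) *
    (φ ((2 : ℝ) ^ j * x - (k : ℝ)) * (starRingEnd ℂ) (φ ((2 : ℝ) ^ j * y - (k : ℝ))))

lemma summable_exp_neg_abs_int {b : ℝ} (hb : 0 < b) :
    Summable (fun n : ℤ => Real.exp (-b * |(n : ℝ)|)) := by
  have hgeom : Summable (fun n : ℕ => Real.exp (-b) ^ n) :=
    summable_geometric_of_lt_one (Real.exp_nonneg _)
      (Real.exp_lt_one_iff.mpr (by linarith))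
  have hnat : Summable (fun n : ℕ => Real.exp (-b * |(n : ℝ)|)) := by
    refine hgeom.congr fun n => ?_
    rw [← Real.exp_nat_mul]
    congr 1
    rw [abs_of_nonneg (Nat.cast_nonneg n)]
    ring
  refine Summable.of_nat_of_neg (hnat.congr fun n => by push_cast; ring_nf)
    (hnat.congr fun n => by push_cast; rw [abs_neg])

lemma exp_abs_sum_le {b u : ℝ} (hb : 0 < b) (k : ℤ) :
    Real.exp (-b * |u - (k : ℝ)|) ≤
      Real.exp (b / 2) * Real.exp (-b * |((k - round u : ℤ) : ℝ)|) := by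
  rw [← Real.exp_add]
  apply Real.exp_le_exp.mpr
  have h1 : |u - (round u : ℝ)| ≤ 1 / 2 := abs_sub_round u
  have h2 : |((k - round u : ℤ) : ℝ)| ≤ |u - (k : ℝ)| + |u - (round u : ℝ)| := by
    push_cast
    have := abs_sub ((k : ℝ) - round u) 0
    calc |((k : ℝ) - round u)| = |((k : ℝ) - u) + (u - round u)| := by ring_nf
      _ ≤ |(k : ℝ) - u| + |u - (round u : ℝ)| := abs_add_le _ _
      _ = |u - (k : ℝ)| + |u - (round u : ℝ)| := by rw [abs_sub_comm]
  have h2' : |((k - round u : ℤ) : ℝ)| ≤ |u - (k : ℝ)| + 1 / 2 := by linarith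
  have h3 := mul_le_mul_of_nonneg_left h2' hb.le
  rw [mul_add] at h3
  linarith

set_option maxHeartbeats 2000000 in
/-- If `φ : ℝ → ℂ` is measurable with exponential decay
`|φ(x)| ≤ C e^{−a|x|}`, then the summation kernel satisfies
`|P_j(x,y)| ≤ C' 2^j e^{−a 2^j |x−y|/2}`. -/
theorem summation_kernel_exponential_bound (φ : ℝ → ℂ) (hmeas : Measurable φ)
    (C a : ℝ) (hC : 0 < C) (ha : 0 < a)
    (hφ : ∀ x : ℝ, ‖φ x‖ ≤ C * Real.exp (-a * |x|)) :
    ∃ C' : ℝ, 0 < C' ∧ ∀ j : ℤ, ∀ x y : ℝ,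
      ‖summationKernel1 φ j x y‖ ≤
        C' * (2 : ℝ) ^ j * Real.exp (-a * (2 : ℝ) ^ j * |x - y| / 2) := by
  set b : ℝ := a / 2 with hbdef
  have hb : 0 < b := by positivity
  have hS : Summable (fun n : ℤ => Real.exp (-b * |(n : ℝ)|)) := summable_exp_neg_abs_int hb
  set S : ℝ := ∑' n : ℤ, Real.exp (-b * |(n : ℝ)|) with hSdef
  have hSpos : 0 < S := by
    have h0 : (0 : ℝ) < Real.exp (-b * |((0 : ℤ) : ℝ)|) := Real.exp_pos _
    calc (0 : ℝ) < Real.exp (-b * |((0 : ℤ) : ℝ)|) := h0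
      _ ≤ S := Summable.le_tsum hS 0 fun n _ => (Real.exp_pos _).le
  refine ⟨C ^ 2 * Real.exp (b / 2) * S, by positivity, ?_⟩
  intro j x y
  set t : ℝ := (2 : ℝ) ^ j with htdef
  have ht : 0 < t := zpow_pos (by norm_num) j
  set u : ℝ := t * x with hudef
  set v : ℝ := t * y with hvdef
  have huv : |u - v| = t * |x - y| := by
    rw [hudef, hvdef, ← mul_sub, abs_mul, abs_of_pos ht]
  -- pointwise bound on terms
  have hterm : ∀ k : ℤ,
      ‖((t : ℂ)) * (φ (u - (k : ℝ)) * (starRingEnd ℂ) (φ (v - (k : ℝ))))‖ ≤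
        (C ^ 2 * t * Real.exp (-b * |u - v|)) * Real.exp (-b * |u - (k : ℝ)|) := by
    intro k
    have h1 := hφ (u - (k : ℝ))
    have h2 := hφ (v - (k : ℝ))
    have hnorm : ‖((t : ℂ)) * (φ (u - (k : ℝ)) * (starRingEnd ℂ) (φ (v - (k : ℝ))))‖ =
        t * (‖φ (u - (k : ℝ))‖ * ‖φ (v - (k : ℝ))‖) := by
      rw [norm_mul, norm_mul, RCLike.norm_conj, Complex.norm_real, Real.norm_eq_abs,
        abs_of_pos ht]
    rw [hnorm]
    have hkey : Real.exp (-a * |u - (k : ℝ)|) * Real.exp (-a * |v - (k : ℝ)|) ≤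
        Real.exp (-b * |u - v|) * Real.exp (-b * |u - (k : ℝ)|) := by
      rw [← Real.exp_add, ← Real.exp_add]
      apply Real.exp_le_exp.mpr
      have htri : |u - v| ≤ |u - (k : ℝ)| + |v - (k : ℝ)| := by
        calc |u - v| = |(u - (k : ℝ)) - (v - (k : ℝ))| := by ring_nf
          _ ≤ |u - (k : ℝ)| + |v - (k : ℝ)| := abs_sub _ _
      have hb2 : a = 2 * b := by rw [hbdef]; ring
      have h4 := mul_le_mul_of_nonneg_left htri hb.le
      rw [mul_add] at h4
      have h5 : 0 ≤ b * |v - (k : ℝ)| := mul_nonneg hb.le (abs_nonneg _)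
      rw [hb2]
      linarith
    calc t * (‖φ (u - (k : ℝ))‖ * ‖φ (v - (k : ℝ))‖)
        ≤ t * ((C * Real.exp (-a * |u - (k : ℝ)|)) * (C * Real.exp (-a * |v - (k : ℝ)|))) := by
          apply mul_le_mul_of_nonneg_left _ ht.le
          exact mul_le_mul h1 h2 (norm_nonneg _) (by positivity)
      _ = C ^ 2 * t * (Real.exp (-a * |u - (k : ℝ)|) * Real.exp (-a * |v - (k : ℝ)|)) := by ring
      _ ≤ C ^ 2 * t * (Real.exp (-b * |u - v|) * Real.exp (-b * |u - (k : ℝ)|)) := by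
          apply mul_le_mul_of_nonneg_left hkey (by positivity)
      _ = (C ^ 2 * t * Real.exp (-b * |u - v|)) * Real.exp (-b * |u - (k : ℝ)|) := by ring
  -- summability of shifted / dominating series
  have hshift : Summable (fun k : ℤ => Real.exp (-b * |((k - round u : ℤ) : ℝ)|)) :=
    ((Equiv.subRight (round u)).summable_iff.mpr hS)
  have hshift_tsum : (∑' k : ℤ, Real.exp (-b * |((k - round u : ℤ) : ℝ)|)) = S :=
    (Equiv.subRight (round u)).tsum_eq (fun n : ℤ => Real.exp (-b * |(n : ℝ)|))
  have hexpsum : Summable (fun k : ℤ => Real.exp (-b * |u - (k : ℝ)|)) := by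
    refine Summable.of_nonneg_of_le (fun k => (Real.exp_pos _).le)
      (fun k => exp_abs_sum_le hb k) (hshift.mul_left _)
  have hexpsum_le : (∑' k : ℤ, Real.exp (-b * |u - (k : ℝ)|)) ≤ Real.exp (b / 2) * S := by
    calc (∑' k : ℤ, Real.exp (-b * |u - (k : ℝ)|))
        ≤ ∑' k : ℤ, Real.exp (b / 2) * Real.exp (-b * |((k - round u : ℤ) : ℝ)|) :=
          Summable.tsum_le_tsum (fun k => exp_abs_sum_le hb k) hexpsum (hshift.mul_left _)
      _ = Real.exp (b / 2) * ∑' k : ℤ, Real.exp (-b * |((k - round u : ℤ) : ℝ)|) :=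
          tsum_mul_left
      _ = Real.exp (b / 2) * S := by rw [hshift_tsum]
  have hsummable : Summable (fun k : ℤ =>
      ‖((t : ℂ)) * (φ (u - (k : ℝ)) * (starRingEnd ℂ) (φ (v - (k : ℝ))))‖) :=
    Summable.of_nonneg_of_le (fun k => norm_nonneg _) hterm (hexpsum.mul_left _)
  have hgoalexp : Real.exp (-a * t * |x - y| / 2) = Real.exp (-b * |u - v|) := by
    rw [huv, hbdef]; ring_nf
  calc ‖summationKernel1 φ j x y‖
      ≤ ∑' k : ℤ, ‖((t : ℂ)) * (φ (u - (k : ℝ)) * (starRingEnd ℂ) (φ (v - (k : ℝ))))‖ :=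
        norm_tsum_le_tsum_norm hsummable
    _ ≤ ∑' k : ℤ, (C ^ 2 * t * Real.exp (-b * |u - v|)) * Real.exp (-b * |u - (k : ℝ)|) :=
        Summable.tsum_le_tsum hterm hsummable (hexpsum.mul_left _)
    _ = (C ^ 2 * t * Real.exp (-b * |u - v|)) * ∑' k : ℤ, Real.exp (-b * |u - (k : ℝ)|) :=
        tsum_mul_left
    _ ≤ (C ^ 2 * t * Real.exp (-b * |u - v|)) * (Real.exp (b / 2) * S) := by
        apply mul_le_mul_of_nonneg_left hexpsum_le (by positivity)
    _ = C ^ 2 * Real.exp (b / 2) * S * t * Real.exp (-b * |u - v|) := by ring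
    _ = C ^ 2 * Real.exp (b / 2) * S * t * Real.exp (-a * t * |x - y| / 2) := by
        rw [hgoalexp]
end
end

section
/- Let φ : ℝ → ℂ be measurable and suppose there exist a real N > 1 and a constant C_N > 0 with |φ(x)| ≤ C_N (1+|x|)^{−N} for all x ∈ ℝ. Then there exists a constant C'_N > 0 such that for all j ∈ ℤ and all x, y ∈ ℝ, the summation kernel satisfies |P_j(x,y)| ≤ C'_N · 2^j · (1 + 2^j|x−y|)^{−N}; in particular |P_j(x,y)| ≤ C'_N · 2^j. -/
open MeasureTheory Filter Topology

noncomputable section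

namespace SK13

variable {N : ℝ}

lemma base_summable (hN : 1 < N) :
    Summable (fun k : ℤ => (1 + |(k : ℝ)|) ^ (-N)) := by
  have h1 : Summable (fun k : ℤ => |(k : ℝ)| ^ (-N)) := Real.summable_abs_int_rpow hN
  have h2 : Summable (fun k : ℤ => if k = 0 then (1 : ℝ) else 0) :=
    summable_of_ne_finset_zero (s := {0}) (by intro k hk; simp at hk; simp [hk])
  refine ((h1.add h2).of_nonneg_of_le (fun k => Real.rpow_nonneg (by positivity) _) ?_)
  intro k
  rcases eq_or_ne k 0 with hk | hk
  · subst hk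
    simp only [Int.cast_zero, abs_zero, add_zero, if_pos]
    rw [Real.zero_rpow (by linarith : -N ≠ 0), Real.rpow_neg (by norm_num : (0:ℝ) ≤ 1),
      Real.one_rpow]
    norm_num
  · simp only [hk, if_neg, if_false, add_zero]
    refine Real.rpow_le_rpow_of_nonpos ?_ (by linarith [abs_nonneg (k:ℝ)]) (by linarith)
    have : (1:ℝ) ≤ |(k:ℝ)| := by
      have := Int.one_le_abs (by omega : k ≠ 0)
      exact_mod_cast (by exact_mod_cast this : (1:ℤ) ≤ |k|) |>.trans_eq (by simp)
    linarith

/-- uniform summability & bound of the shifted sum -/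
lemma shifted_le (hN : 1 < N) (a : ℝ) (k : ℤ) :
    (1 + |a - ((k + ⌊a⌋ : ℤ) : ℝ)|) ^ (-N) ≤ (2:ℝ) ^ N * (1 + |(k : ℝ)|) ^ (-N) := by
  have hf0 : (0:ℝ) ≤ a - ⌊a⌋ := by linarith [Int.floor_le a]
  have hf1 : a - ⌊a⌋ < 1 := by linarith [Int.lt_floor_add_one a]
  have key : 1 + |(k:ℝ)| ≤ 2 * (1 + |a - ((k + ⌊a⌋ : ℤ) : ℝ)|) := by
    push_cast
    have h1 : |a - ((k:ℝ) + ⌊a⌋)| = |(a - ⌊a⌋) - k| := by ring_nf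
    rw [h1]
    rcases eq_or_ne k 0 with hk | hk
    · subst hk
      simp only [Int.cast_zero, abs_zero, sub_zero]
      have h0 := abs_nonneg (a - (⌊a⌋:ℝ))
      linarith
    · have hk1 : (1:ℝ) ≤ |(k:ℝ)| := by
        have := Int.one_le_abs (by omega : k ≠ 0)
        calc (1:ℝ) ≤ ((|k| : ℤ) : ℝ) := by exact_mod_cast this
        _ = |(k:ℝ)| := by push_cast; simp
      have h3 := abs_sub_abs_le_abs_sub (k:ℝ) (a - ⌊a⌋)
      rw [show (k:ℝ) - (a - ⌊a⌋) = -((a - ⌊a⌋) - k) by ring, abs_neg] at h3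
      have h2 : |a - (⌊a⌋:ℝ)| ≤ 1 := by rw [abs_of_nonneg hf0]; linarith
      linarith
  have h2 : (0:ℝ) < 1 + |(k:ℝ)| := by positivity
  calc (1 + |a - ((k + ⌊a⌋ : ℤ) : ℝ)|) ^ (-N)
      ≤ ((1 + |(k:ℝ)|) / 2) ^ (-N) := by
        refine Real.rpow_le_rpow_of_nonpos (by positivity) (by linarith) (by linarith)
    _ = (2:ℝ) ^ N * (1 + |(k : ℝ)|) ^ (-N) := by
        rw [Real.div_rpow (by positivity) (by norm_num), Real.rpow_neg (by norm_num : (0:ℝ) ≤ 2)]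
        field_simp

lemma sum_summable (hN : 1 < N) (a : ℝ) :
    Summable (fun k : ℤ => (1 + |a - (k : ℝ)|) ^ (-N)) := by
  have h := ((base_summable hN).mul_left ((2:ℝ) ^ N)).of_nonneg_of_le
    (fun k => Real.rpow_nonneg (by positivity) _) (shifted_le hN a)
  have := (Equiv.addRight (⌊a⌋ : ℤ)).summable_iff
    (f := fun k : ℤ => (1 + |a - (k : ℝ)|) ^ (-N))
  rw [← this]
  exact h

lemma sum_le (hN : 1 < N) (a : ℝ) :
    ∑' k : ℤ, (1 + |a - (k : ℝ)|) ^ (-N)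
      ≤ (2:ℝ) ^ N * ∑' k : ℤ, (1 + |(k : ℝ)|) ^ (-N) := by
  rw [← (Equiv.addRight (⌊a⌋ : ℤ)).tsum_eq (fun k : ℤ => (1 + |a - (k : ℝ)|) ^ (-N))]
  rw [← tsum_mul_left]
  refine Summable.tsum_le_tsum (fun k => shifted_le hN a k) ?_ ((base_summable hN).mul_left _)
  · exact ((base_summable hN).mul_left ((2:ℝ) ^ N)).of_nonneg_of_le
      (fun k => Real.rpow_nonneg (by positivity) _) (shifted_le hN a)

/-- Key product inequality. -/
lemma prod_ineq (hN : 1 < N) {u v d : ℝ} (hu : 1 ≤ u) (hv : 1 ≤ v) (hd : 0 ≤ d)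
    (h : 1 + d ≤ u + v) :
    u ^ (-N) * v ^ (-N) ≤ (2:ℝ) ^ N * (1 + d) ^ (-N) * (u ^ (-N) + v ^ (-N)) := by
  have hN0 : (0:ℝ) < N := by linarith
  rcases le_total u v with huv | huv
  · -- v is the max : v ≥ (1+d)/2
    have hv2 : (1 + d) / 2 ≤ v := by linarith
    have : v ^ (-N) ≤ (2:ℝ) ^ N * (1 + d) ^ (-N) := by
      calc v ^ (-N) ≤ ((1 + d)/2) ^ (-N) :=
            Real.rpow_le_rpow_of_nonpos (by positivity) hv2 (by linarith)
        _ = (2:ℝ) ^ N * (1 + d) ^ (-N) := by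
            rw [Real.div_rpow (by positivity) (by norm_num),
              Real.rpow_neg (by norm_num : (0:ℝ) ≤ 2)]
            field_simp
    have hu0 : 0 ≤ u ^ (-N) := Real.rpow_nonneg (by linarith) _
    have hv0 : 0 ≤ v ^ (-N) := Real.rpow_nonneg (by linarith) _
    calc u ^ (-N) * v ^ (-N) ≤ u ^ (-N) * ((2:ℝ) ^ N * (1 + d) ^ (-N)) :=
          mul_le_mul_of_nonneg_left this hu0
      _ ≤ (2:ℝ) ^ N * (1 + d) ^ (-N) * (u ^ (-N) + v ^ (-N)) := by
          rw [mul_comm (u ^ (-N))]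
          have h1 : (0:ℝ) ≤ (2:ℝ) ^ N * (1 + d) ^ (-N) := by positivity
          nlinarith
  · have hu2 : (1 + d) / 2 ≤ u := by linarith
    have : u ^ (-N) ≤ (2:ℝ) ^ N * (1 + d) ^ (-N) := by
      calc u ^ (-N) ≤ ((1 + d)/2) ^ (-N) :=
            Real.rpow_le_rpow_of_nonpos (by positivity) hu2 (by linarith)
        _ = (2:ℝ) ^ N * (1 + d) ^ (-N) := by
            rw [Real.div_rpow (by positivity) (by norm_num),
              Real.rpow_neg (by norm_num : (0:ℝ) ≤ 2)]
            field_simp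
    have hu0 : 0 ≤ u ^ (-N) := Real.rpow_nonneg (by linarith) _
    have hv0 : 0 ≤ v ^ (-N) := Real.rpow_nonneg (by linarith) _
    calc u ^ (-N) * v ^ (-N) ≤ ((2:ℝ) ^ N * (1 + d) ^ (-N)) * v ^ (-N) :=
          mul_le_mul_of_nonneg_right this hv0
      _ ≤ (2:ℝ) ^ N * (1 + d) ^ (-N) * (u ^ (-N) + v ^ (-N)) := by
          have h1 : (0:ℝ) ≤ (2:ℝ) ^ N * (1 + d) ^ (-N) := by positivity
          nlinarith

end SK13

/-- If `φ : ℝ → ℂ` is measurable with algebraic decay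
`|φ(x)| ≤ C_N (1+|x|)^{−N}` for some real `N > 1`, then the summation kernel satisfies
`|P_j(x,y)| ≤ C'_N 2^j (1 + 2^j|x−y|)^{−N}`; in particular `|P_j(x,y)| ≤ C'_N 2^j`. -/
theorem summation_kernel_algebraic_bound (φ : ℝ → ℂ) (hmeas : Measurable φ)
    (N CN : ℝ) (hN : 1 < N) (hCN : 0 < CN)
    (hφ : ∀ x : ℝ, ‖φ x‖ ≤ CN * (1 + |x|) ^ (-N)) :
    ∃ C' : ℝ, 0 < C' ∧ ∀ j : ℤ, ∀ x y : ℝ,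
      ‖summationKernel1 φ j x y‖ ≤ C' * (2 : ℝ) ^ j * (1 + (2 : ℝ) ^ j * |x - y|) ^ (-N) ∧
      ‖summationKernel1 φ j x y‖ ≤ C' * (2 : ℝ) ^ j := by
  classical
  set S0 : ℝ := ∑' k : ℤ, (1 + |(k : ℝ)|) ^ (-N) with hS0
  have hS0pos : 0 < S0 := by
    have h0 : (0:ℝ) < (1 + |((0:ℤ) : ℝ)|) ^ (-N) := by
      have : ((0:ℤ):ℝ) = 0 := by norm_num
      rw [this, abs_zero, add_zero, Real.one_rpow]
      norm_num
    exact h0.trans_le (Summable.le_tsum (SK13.base_summable hN) 0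
      (fun k _ => Real.rpow_nonneg (by positivity) _))
  refine ⟨CN ^ 2 * (2:ℝ) ^ N * (2 * ((2:ℝ) ^ N * S0)), by positivity, ?_⟩
  intro j x y
  set a : ℝ := (2:ℝ) ^ j * x
  set b : ℝ := (2:ℝ) ^ j * y
  set d : ℝ := (2:ℝ) ^ j * |x - y| with hd
  have h2j : (0:ℝ) < (2:ℝ) ^ j := zpow_pos (by norm_num) j
  have hdab : |a - b| = d := by
    rw [hd]; simp only [a, b, ← mul_sub, abs_mul, abs_of_pos h2j]
  have hd0 : 0 ≤ d := by rw [← hdab]; exact abs_nonneg _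
  -- termwise bound on norms
  set u : ℤ → ℝ := fun k => 1 + |a - (k:ℝ)| with hu
  set v : ℤ → ℝ := fun k => 1 + |b - (k:ℝ)| with hv
  have hu1 : ∀ k, 1 ≤ u k := fun k => by simp only [hu]; linarith [abs_nonneg (a - (k:ℝ))]
  have hv1 : ∀ k, 1 ≤ v k := fun k => by simp only [hv]; linarith [abs_nonneg (b - (k:ℝ))]
  have hterm : ∀ k : ℤ,
      ‖(((2 : ℝ) ^ j : ℝ) : ℂ) * (φ (a - (k:ℝ)) * (starRingEnd ℂ) (φ (b - (k:ℝ))))‖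
        ≤ (2:ℝ) ^ j * (CN ^ 2 * (u k ^ (-N) * v k ^ (-N))) := by
    intro k
    rw [norm_mul, norm_mul, RCLike.norm_conj, Complex.norm_real,
      Real.norm_eq_abs, abs_of_pos h2j]
    have h1 := hφ (a - (k:ℝ))
    have h2 := hφ (b - (k:ℝ))
    have hφ1 : (0:ℝ) ≤ ‖φ (a - (k:ℝ))‖ := norm_nonneg _
    have hφ2 : (0:ℝ) ≤ ‖φ (b - (k:ℝ))‖ := norm_nonneg _
    have := mul_le_mul h1 h2 hφ2 (by positivity)
    refine mul_le_mul_of_nonneg_left ?_ h2j.le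
    calc ‖φ (a - (k:ℝ))‖ * ‖φ (b - (k:ℝ))‖
        ≤ (CN * u k ^ (-N)) * (CN * v k ^ (-N)) := this
      _ = CN ^ 2 * (u k ^ (-N) * v k ^ (-N)) := by ring
  -- summability facts
  have hSa : Summable (fun k : ℤ => u k ^ (-N)) := SK13.sum_summable hN a
  have hSb : Summable (fun k : ℤ => v k ^ (-N)) := SK13.sum_summable hN b
  have hvle1 : ∀ k, v k ^ (-N) ≤ 1 :=
    fun k => Real.rpow_le_one_of_one_le_of_nonpos (hv1 k) (by linarith)
  have hprod_sum : Summable (fun k : ℤ => u k ^ (-N) * v k ^ (-N)) := by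
    refine hSa.of_nonneg_of_le (fun k => by positivity) (fun k => ?_)
    have h0 : (0:ℝ) ≤ u k ^ (-N) :=
      Real.rpow_nonneg (le_trans zero_le_one (hu1 k)) _
    exact mul_le_of_le_one_right h0 (hvle1 k)
  have hnorm_sum : Summable (fun k : ℤ =>
      ‖(((2 : ℝ) ^ j : ℝ) : ℂ) * (φ (a - (k:ℝ)) * (starRingEnd ℂ) (φ (b - (k:ℝ))))‖) := by
    refine ((hprod_sum.mul_left (CN ^ 2)).mul_left ((2:ℝ)^j)).of_nonneg_of_le
      (fun k => norm_nonneg _) (fun k => ?_)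
    simpa [mul_assoc] using hterm k
  -- norm of tsum
  have hP : ‖summationKernel1 φ j x y‖ ≤
      (2:ℝ) ^ j * (CN ^ 2 * ∑' k : ℤ, u k ^ (-N) * v k ^ (-N)) := by
    calc ‖summationKernel1 φ j x y‖
        ≤ ∑' k : ℤ, ‖(((2 : ℝ) ^ j : ℝ) : ℂ) *
            (φ (a - (k:ℝ)) * (starRingEnd ℂ) (φ (b - (k:ℝ))))‖ :=
          norm_tsum_le_tsum_norm hnorm_sum
      _ ≤ ∑' k : ℤ, (2:ℝ) ^ j * (CN ^ 2 * (u k ^ (-N) * v k ^ (-N))) :=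
          Summable.tsum_le_tsum hterm hnorm_sum (by
            simpa [mul_assoc] using ((hprod_sum.mul_left (CN ^ 2)).mul_left ((2:ℝ)^j)))
      _ = (2:ℝ) ^ j * (CN ^ 2 * ∑' k : ℤ, u k ^ (-N) * v k ^ (-N)) := by
          rw [tsum_mul_left, tsum_mul_left]
  -- bound the product sum
  have hkey : ∀ k : ℤ, u k ^ (-N) * v k ^ (-N)
      ≤ (2:ℝ) ^ N * (1 + d) ^ (-N) * (u k ^ (-N) + v k ^ (-N)) := by
    intro k
    refine SK13.prod_ineq hN (hu1 k) (hv1 k) hd0 ?_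
    have : |a - b| ≤ |a - (k:ℝ)| + |b - (k:ℝ)| := by
      have := abs_sub_abs_le_abs_sub (a - (k:ℝ)) (b - (k:ℝ))
      calc |a - b| = |(a - (k:ℝ)) - (b - (k:ℝ))| := by ring_nf
        _ ≤ |a - (k:ℝ)| + |b - (k:ℝ)| := abs_sub _ _
    rw [hdab] at this
    simp only [hu, hv]
    linarith
  have hsum_bound : ∑' k : ℤ, u k ^ (-N) * v k ^ (-N)
      ≤ (2:ℝ) ^ N * (1 + d) ^ (-N) * (2 * ((2:ℝ) ^ N * S0)) := by
    have hRHS : Summable (fun k : ℤ =>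
        (2:ℝ) ^ N * (1 + d) ^ (-N) * (u k ^ (-N) + v k ^ (-N))) :=
      (hSa.add hSb).mul_left _
    calc ∑' k : ℤ, u k ^ (-N) * v k ^ (-N)
        ≤ ∑' k : ℤ, (2:ℝ) ^ N * (1 + d) ^ (-N) * (u k ^ (-N) + v k ^ (-N)) :=
          Summable.tsum_le_tsum hkey hprod_sum hRHS
      _ = (2:ℝ) ^ N * (1 + d) ^ (-N) *
          ((∑' k : ℤ, u k ^ (-N)) + ∑' k : ℤ, v k ^ (-N)) := by
          rw [tsum_mul_left, Summable.tsum_add hSa hSb]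
      _ ≤ (2:ℝ) ^ N * (1 + d) ^ (-N) * (2 * ((2:ℝ) ^ N * S0)) := by
          have h1 := SK13.sum_le hN a
          have h2 := SK13.sum_le hN b
          have hc : (0:ℝ) ≤ (2:ℝ) ^ N * (1 + d) ^ (-N) := by positivity
          refine mul_le_mul_of_nonneg_left ?_ hc
          simp only [hu, hv] at h1 h2 ⊢
          linarith
  have main : ‖summationKernel1 φ j x y‖ ≤
      CN ^ 2 * (2:ℝ) ^ N * (2 * ((2:ℝ) ^ N * S0)) * (2:ℝ) ^ j * (1 + d) ^ (-N) := by
    calc ‖summationKernel1 φ j x y‖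
        ≤ (2:ℝ) ^ j * (CN ^ 2 * ((2:ℝ) ^ N * (1 + d) ^ (-N) * (2 * ((2:ℝ) ^ N * S0)))) := by
          refine hP.trans ?_
          refine mul_le_mul_of_nonneg_left (mul_le_mul_of_nonneg_left hsum_bound (by positivity)) h2j.le
      _ = CN ^ 2 * (2:ℝ) ^ N * (2 * ((2:ℝ) ^ N * S0)) * (2:ℝ) ^ j * (1 + d) ^ (-N) := by ring
  refine ⟨main, ?_⟩
  refine main.trans ?_
  have : (1 + d) ^ (-N) ≤ 1 :=
    Real.rpow_le_one_of_one_le_of_nonpos (by linarith) (by linarith)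
  have hc : (0:ℝ) ≤ CN ^ 2 * (2:ℝ) ^ N * (2 * ((2:ℝ) ^ N * S0)) * (2:ℝ) ^ j := by positivity
  calc CN ^ 2 * (2:ℝ) ^ N * (2 * ((2:ℝ) ^ N * S0)) * (2:ℝ) ^ j * (1 + d) ^ (-N)
      ≤ CN ^ 2 * (2:ℝ) ^ N * (2 * ((2:ℝ) ^ N * S0)) * (2:ℝ) ^ j * 1 :=
        mul_le_mul_of_nonneg_left this hc
    _ = CN ^ 2 * (2:ℝ) ^ N * (2 * ((2:ℝ) ^ N * S0)) * (2:ℝ) ^ j := by ring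
end
end
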